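/- arXiv:2502.18234 — 3 statements merged into one kernel-verified Lean document; each statement's English description precedes it below -/
import Mathlib

section
/- (Time-dominance, Case 1) Let an EV start at node i with SoC q_i and travel to node j either via charging station s (path p) or via station s' (path p'), arriving at j with the same final SoC q_j in both cases. Assume e_is < e_is', e_sj < e_s'j, t_is + t_sj < t_is' + t_s'j, and that the charging function f_s is at least as fast as f_s' (f_s(q) - f_s(p) ≤ f_s'(q) - f_s'(p) for all p ≤ q). Then the arrival time at j via path p is strictly smaller than via path p': τ_i + t_is + t_sj + (f_s(q_s⁻) - f_s(q_s⁺)) < τ_i + t_is' + t_s'j + (f_s'(q_s'⁻) - f_s'(q_s'⁺)), where q_s⁺ = q_i - e_is, q_s'⁺ = q_i - e_is', q_s⁻ = q_j + e_sj, q_s'⁻ = q_j + e_s'j. -/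
/-- Time-dominance, Case 1: with `e_is < e_is'`, `e_sj < e_s'j`,
`t_is + t_sj < t_is' + t_s'j` and `f_s` at least as fast as `f_s'`, equal final SoC
implies the arrival time via the path through `s` is strictly smaller. -/
theorem case1_time_dominance
    (Q τi qi qj : ℝ)
    (eis eisp esj espj tis tisp tsj tspj : ℝ)
    (fs fsp : ℝ → ℝ)
    (hfs : StrictMonoOn fs (Set.Icc 0 Q)) (hfsp : StrictMonoOn fsp (Set.Icc 0 Q))
    (hee : 0 ≤ eis) (hee' : 0 ≤ esj) (hte : 0 ≤ tis) (hte' : 0 ≤ tsj)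
    (hee2 : 0 ≤ eisp) (hee2' : 0 ≤ espj) (hte2 : 0 ≤ tisp) (hte2' : 0 ≤ tspj)
    (h1 : eis < eisp) (h2 : esj < espj)
    (h3 : tis + tsj < tisp + tspj)
    (hfast : ∀ p q : ℝ, 0 ≤ p → p ≤ q → q ≤ Q → fs q - fs p ≤ fsp q - fsp p)
    (hqi : qi ∈ Set.Icc (0 : ℝ) Q) (hqj : 0 ≤ qj)
    -- arrival SoC ≤ departure SoC for both paths, all SoC values in [0,Q]
    (harrs : qi - eis ∈ Set.Icc (0 : ℝ) Q) (hdeps : qj + esj ∈ Set.Icc (0 : ℝ) Q)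
    (harrsp : qi - eisp ∈ Set.Icc (0 : ℝ) Q) (hdepsp : qj + espj ∈ Set.Icc (0 : ℝ) Q)
    (hads : qi - eis ≤ qj + esj) (hadsp : qi - eisp ≤ qj + espj) :
    τi + tis + tsj + (fs (qj + esj) - fs (qi - eis)) <
      τi + tisp + tspj + (fsp (qj + espj) - fsp (qi - eisp)) := by
  have h4 : fs (qj + esj) - fs (qi - eis) ≤ fsp (qj + esj) - fsp (qi - eis) :=
    hfast _ _ harrs.1 hads hdeps.2
  have h5 : fsp (qj + esj) ≤ fsp (qj + espj) :=
    hfsp.monotoneOn hdeps hdepsp (by linarith)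
  have h6 : fsp (qi - eisp) ≤ fsp (qi - eis) :=
    hfsp.monotoneOn harrsp harrs (by linarith)
  linarith
end

section
/- (Energy-dominance, Case 1) Under the setting of Case 1 (e_is < e_is', e_sj < e_s'j, t_is + t_sj < t_is' + t_s'j, and f_s at least as fast as f_s'), if both paths reach destination j at the same time τ_j, then the final SoC via path p is strictly greater than via path p': q_i - e_is - e_sj + Δq_s > q_i - e_is' - e_s'j + Δq_{s'}, where Δq_s and Δq_{s'} are the amounts of energy charged at s and s' respectively, determined by the equal-time condition t_is + t_sj + f_s-time(Δq_s) = t_is' + t_s'j + f_s'-time(Δq_{s'}) with f-time denoting the charging duration of the respective amount starting from the arrival SoC. -/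
/-- Energy-dominance, Case 1: under the Case 1 assumptions, if both
paths reach `j` at the same time, the final SoC via the path through `s` is strictly
greater than via the path through `s'`. -/
theorem case1_energy_dominance
    (Q qi : ℝ)
    (eis eisp esj espj tis tisp tsj tspj : ℝ)
    (Δqs Δqsp : ℝ)
    (fs fsp : ℝ → ℝ)
    (hfs : StrictMonoOn fs (Set.Icc 0 Q)) (hfsp : StrictMonoOn fsp (Set.Icc 0 Q))
    (hee : 0 ≤ eis) (hee' : 0 ≤ esj) (hte : 0 ≤ tis) (hte' : 0 ≤ tsj)
    (hee2 : 0 ≤ eisp) (hee2' : 0 ≤ espj) (hte2 : 0 ≤ tisp) (hte2' : 0 ≤ tspj)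
    (h1 : eis < eisp) (h2 : esj < espj)
    (h3 : tis + tsj < tisp + tspj)
    (hfast : ∀ p q : ℝ, 0 ≤ p → p ≤ q → q ≤ Q → fs q - fs p ≤ fsp q - fsp p)
    (hqi : qi ∈ Set.Icc (0 : ℝ) Q)
    (hΔqs : 0 ≤ Δqs) (hΔqsp : 0 ≤ Δqsp)
    -- all SoC values lie in [0,Q]
    (harrs : qi - eis ∈ Set.Icc (0 : ℝ) Q)
    (harrsp : qi - eisp ∈ Set.Icc (0 : ℝ) Q)
    (hdeps : qi - eis + Δqs ∈ Set.Icc (0 : ℝ) Q)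
    (hdepsp : qi - eisp + Δqsp ∈ Set.Icc (0 : ℝ) Q)
    -- equal arrival-time condition determining the charged amounts
    (heq : tis + tsj + (fs (qi - eis + Δqs) - fs (qi - eis)) =
           tisp + tspj + (fsp (qi - eisp + Δqsp) - fsp (qi - eisp))) :
    qi - eis - esj + Δqs > qi - eisp - espj + Δqsp := by
  have hm := hfsp.monotoneOn
  have key : qi - eisp + Δqsp ≤ qi - eis + Δqs := by
    by_contra h
    push_neg at h
    have h4 : fs (qi - eis + Δqs) - fs (qi - eis) ≤
        fsp (qi - eis + Δqs) - fsp (qi - eis) :=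
      hfast _ _ harrs.1 (by linarith) hdeps.2
    have h5 : fsp (qi - eisp) ≤ fsp (qi - eis) :=
      hm harrsp harrs (by linarith)
    have h6 : fsp (qi - eis + Δqs) ≤ fsp (qi - eisp + Δqsp) :=
      hm hdeps hdepsp h.le
    linarith
  linarith
end

section
/- (Correctness of the piecewise-function mapping constraints) Let 0 < E₁ < E₂ < ... < E_b be segment lengths of a piecewise function with segment values E'_k = E_k - E_{k-1} (E₀ = 0) and time increments T'_k = T_k - T_{k-1}. Suppose coefficients α_k ∈ [0,1] and binaries z_k ∈ {0,1} satisfy: α_{k+1} ≤ α_k, z_{k+1} ≤ α_k, z_k ≥ α_k for all applicable k. Then there exists an index m such that α_k = 1 for all k < m, α_m ∈ [0,1], and α_k = 0 for all k > m; consequently q = Σ_k α_k E'_k determines the time s = Σ_k α_k T'_k as exactly the piecewise-linear interpolation value f(q), where f is the piecewise linear function through the breakpoints (E_k, T_k). -/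
/-- Correctness of the piecewise-function mapping constraints: if the
coefficients `α k ∈ [0,1]` and binaries `z k ∈ {0,1}` satisfy `α (k+1) ≤ α k`,
`z (k+1) ≤ α k`, and `α k ≤ z k`, then there is an index `m` with `α k = 1` for
`k < m` and `α k = 0` for `k > m`; consequently `q = Σ α k E'_k` is mapped by the
piecewise linear interpolant `f` exactly to `s = Σ α k T'_k`. -/
theorem piecewise_mapping_constraints_correct
    (b : ℕ) (hb : 0 < b) (E T : ℕ → ℝ) (f : ℝ → ℝ) (α z : ℕ → ℝ)
    (hE0 : E 0 = 0) (hT0 : T 0 = 0)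
    (hE : ∀ k < b, E k < E (k + 1)) (hT : ∀ k < b, T k < T (k + 1))
    (hf : ∀ k < b, ∀ x ∈ Set.Icc (E k) (E (k + 1)),
      f x = T k + (T (k + 1) - T k) * (x - E k) / (E (k + 1) - E k))
    (hα : ∀ k, 1 ≤ k → k ≤ b → α k ∈ Set.Icc (0 : ℝ) 1)
    (hz : ∀ k, 1 ≤ k → k ≤ b → z k = 0 ∨ z k = 1)
    (hαmono : ∀ k, 1 ≤ k → k < b → α (k + 1) ≤ α k)
    (hzα : ∀ k, 1 ≤ k → k < b → z (k + 1) ≤ α k)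
    (hαz : ∀ k, 1 ≤ k → k ≤ b → α k ≤ z k) :
    (∃ m, 1 ≤ m ∧ m ≤ b ∧ (∀ k, 1 ≤ k → k < m → α k = 1) ∧
      (∀ k, m < k → k ≤ b → α k = 0)) ∧
    f (∑ k ∈ Finset.Icc 1 b, α k * (E k - E (k - 1))) =
      ∑ k ∈ Finset.Icc 1 b, α k * (T k - T (k - 1)) := by
  classical
  -- basic facts
  have hα0 : ∀ k, 1 ≤ k → k ≤ b → 0 ≤ α k := fun k h1 h2 => (hα k h1 h2).1
  have hα1 : ∀ k, 1 ≤ k → k ≤ b → α k ≤ 1 := fun k h1 h2 => (hα k h1 h2).2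
  -- if α (k+1) > 0 then α k = 1
  have key : ∀ k, 1 ≤ k → k < b → 0 < α (k + 1) → α k = 1 := by
    intro k h1 h2 hpos
    have hz1 : z (k + 1) = 1 := by
      rcases hz (k + 1) (by omega) (by omega) with h | h
      · exfalso
        have := hαz (k + 1) (by omega) (by omega)
        rw [h] at this; linarith
      · exact h
    have := hzα k h1 h2
    rw [hz1] at this
    exact le_antisymm (hα1 k h1 (le_of_lt h2)) this
  -- monotonicity: α j ≤ α i for i ≤ j
  have mono : ∀ j, 1 ≤ j → j ≤ b → ∀ i, 1 ≤ i → i ≤ j → α j ≤ α i := by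
    intro j
    induction j with
    | zero => omega
    | succ n ih =>
      intro h1 h2 i hi1 hi2
      rcases Nat.eq_or_lt_of_le hi2 with h | h
      · rw [h]
      · have hn1 : 1 ≤ n := by omega
        calc α (n + 1) ≤ α n := hαmono n hn1 (by omega)
          _ ≤ α i := ih hn1 (by omega) i hi1 (by omega)
  -- get m
  obtain ⟨m, hm1, hmb, hlt, hgt⟩ : ∃ m, 1 ≤ m ∧ m ≤ b ∧ (∀ k, 1 ≤ k → k < m → α k = 1) ∧
      (∀ k, m < k → k ≤ b → α k = 0) := by
    by_cases hall : ∀ k, 1 ≤ k → k ≤ b → α k = 0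
    · exact ⟨1, le_refl 1, hb, fun k hk hk' => by omega, fun k hk hk' => hall k (by omega) hk'⟩
    · push_neg at hall
      obtain ⟨j, hj1, hjb, hjne⟩ := hall
      set S := (Finset.Icc 1 b).filter (fun k => α k ≠ 0) with hS
      have hSne : S.Nonempty := ⟨j, by simp [hS, Finset.mem_filter, Finset.mem_Icc]; exact ⟨⟨hj1, hjb⟩, hjne⟩⟩
      set m := S.max' hSne with hm
      have hmS : m ∈ S := S.max'_mem hSne
      simp only [hS, Finset.mem_filter, Finset.mem_Icc] at hmS
      obtain ⟨⟨hm1, hmb⟩, hmne⟩ := hmS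
      have hmpos : 0 < α m := lt_of_le_of_ne (hα0 m hm1 hmb) (Ne.symm hmne)
      refine ⟨m, hm1, hmb, ?_, ?_⟩
      · intro k hk1 hkm
        have hk1m : 0 < α (k + 1) := lt_of_lt_of_le hmpos (mono m hm1 hmb (k+1) (by omega) (by omega))
        exact key k hk1 (by omega) hk1m
      · intro k hkm hkb
        by_contra hne
        have : k ∈ S := by simp [hS, Finset.mem_filter, Finset.mem_Icc]; exact ⟨⟨by omega, hkb⟩, hne⟩
        have := S.le_max' k this
        omega
  refine ⟨⟨m, hm1, hmb, hlt, hgt⟩, ?_⟩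
  -- telescoping helper
  have tele : ∀ g : ℕ → ℝ, g 0 = 0 → ∀ n, n < m →
      ∑ k ∈ Finset.Icc 1 n, α k * (g k - g (k - 1)) = g n := by
    intro g hg0 n
    induction n with
    | zero => intro _; simp [hg0]
    | succ p ih =>
      intro hpm
      rw [Finset.sum_Icc_succ_top (by omega : 1 ≤ p + 1)]
      rw [ih (by omega), hlt (p + 1) (by omega) hpm]
      simp
  -- sum formula
  have sum_formula : ∀ g : ℕ → ℝ, g 0 = 0 →
      ∑ k ∈ Finset.Icc 1 b, α k * (g k - g (k - 1)) = g (m - 1) + α m * (g m - g (m - 1)) := by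
    intro g hg0
    have hsplit : Finset.Icc 1 b = Finset.Icc 1 m ∪ Finset.Ioc m b := by
      ext x; simp [Finset.mem_Icc, Finset.mem_Ioc, Finset.mem_union]; omega
    rw [hsplit, Finset.sum_union (by
      rw [Finset.disjoint_left]; intro x hx hx'
      simp [Finset.mem_Icc, Finset.mem_Ioc] at hx hx'; omega)]
    have h2 : ∑ k ∈ Finset.Ioc m b, α k * (g k - g (k - 1)) = 0 := by
      apply Finset.sum_eq_zero
      intro k hk
      simp [Finset.mem_Ioc] at hk
      rw [hgt k hk.1 hk.2]; ring
    rw [h2, add_zero]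
    have hmeq : m = (m - 1) + 1 := by omega
    rw [hmeq, Finset.sum_Icc_succ_top (by omega : 1 ≤ m - 1 + 1), tele g hg0 (m - 1) (by omega)]
    rw [← hmeq]
  rw [sum_formula E hE0, sum_formula T hT0]
  -- apply hf on segment m-1
  have hm1b : m - 1 < b := by omega
  have hmeq : m - 1 + 1 = m := by omega
  have hEpos : 0 < E m - E (m - 1) := by
    have := hE (m - 1) hm1b; rw [hmeq] at this; linarith
  have hαm := hα m hm1 hmb
  have hx : E (m - 1) + α m * (E m - E (m - 1)) ∈ Set.Icc (E (m - 1)) (E (m - 1 + 1)) := by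
    rw [hmeq]
    constructor
    · nlinarith [hαm.1]
    · nlinarith [hαm.2]
  have := hf (m - 1) hm1b _ hx
  rw [hmeq] at this
  rw [this]
  field_simp
  ring
end
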